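/- arXiv:2411.09401 — 3 statements merged into one kernel-verified Lean document; each statement's English description precedes it below -/
import Mathlib

section
/- Let $\mathcal{E}$ be an exact category, $Q:\mathcal{E}^{op}\to\mathrm{Ab}$ a quadratic functor with polarisation $B$, transfer $\tau$ and restriction $\rho$ satisfying the form-category axioms. If $x \xrightarrow{i} y \xrightarrow{p} z$ is a split exact sequence in $\mathcal{E}$, then the sequence of abelian groups $0 \to Q(z) \xrightarrow{Q(p)} Q(y) \xrightarrow{(Q(i), -\mathbb{D}(i)_*\rho_y)} Q(x)\oplus \mathrm{Hom}(y,\mathbb{D}(x)) \xrightarrow{(\rho_x, i^*)} \mathrm{Hom}(x,\mathbb{D}(x)) \to 0$ is exact. Equivalently, $Q(p)$ exhibits $Q(z)$ as the total kernel of the square with entries $Q(y), Q(x), B(y,x), B(x,x)$. -/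
open CategoryTheory

universe v u w

/-- For an additive form category `(𝓔, Q, 𝔻, η)` (quadratic functor `Q` with
transfer `τ` and restriction `ρ` satisfying the form-category axioms) and a split
exact sequence `x → y → z`, the sequence
`0 → Q(z) → Q(y) → Q(x) ⊕ Hom(y, 𝔻 x) → Hom(x, 𝔻 x) → 0`
of abelian groups is exact. -/
theorem stmt2 {E : Type u} [Category.{v} E] [Preadditive E]
    (D : E → E) (Dmap : ∀ {x y : E}, (x ⟶ y) → (D y ⟶ D x))
    (Dmap_id : ∀ x : E, Dmap (𝟙 x) = 𝟙 (D x))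
    (Dmap_comp : ∀ {x y z : E} (f : x ⟶ y) (g : y ⟶ z), Dmap (f ≫ g) = Dmap g ≫ Dmap f)
    (Dmap_add : ∀ {x y : E} (f g : x ⟶ y), Dmap (f + g) = Dmap f + Dmap g)
    (η : ∀ x : E, x ⟶ D (D x))
    (η_nat : ∀ {x y : E} (f : x ⟶ y), f ≫ η y = η x ≫ Dmap (Dmap f))
    (η_coh : ∀ x : E, η (D x) ≫ Dmap (η x) = 𝟙 (D x))
    (Q : E → Type w) [∀ a : E, AddCommGroup (Q a)]
    (Qmap : ∀ {a b : E}, (a ⟶ b) → (Q b →+ Q a))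
    (Qmap_id : ∀ (a : E) (ξ : Q a), Qmap (𝟙 a) ξ = ξ)
    (Qmap_comp : ∀ {a b c : E} (f : a ⟶ b) (g : b ⟶ c) (ξ : Q c),
      Qmap (f ≫ g) ξ = Qmap f (Qmap g ξ))
    (τ : ∀ a : E, (a ⟶ D a) →+ Q a)
    (ρ : ∀ a : E, Q a →+ (a ⟶ D a))
    (τ_nat : ∀ {a b : E} (f : a ⟶ b) (φ : b ⟶ D b),
      Qmap f (τ b φ) = τ a (f ≫ φ ≫ Dmap f))
    (ρ_nat : ∀ {a b : E} (f : a ⟶ b) (ξ : Q b),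
      ρ a (Qmap f ξ) = f ≫ ρ b ξ ≫ Dmap f)
    (ρτ : ∀ (a : E) (φ : a ⟶ D a), ρ a (τ a φ) = φ + η a ≫ Dmap φ)
    (τ_equivariant : ∀ (a : E) (φ : a ⟶ D a), τ a (η a ≫ Dmap φ) = τ a φ)
    (ρ_symm : ∀ (a : E) (ξ : Q a), η a ≫ Dmap (ρ a ξ) = ρ a ξ)
    (Qmap_sum : ∀ {a b : E} (f g : a ⟶ b) (ξ : Q b),
      Qmap (f + g) ξ = Qmap f ξ + Qmap g ξ + τ a (f ≫ ρ b ξ ≫ Dmap g))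
    {x y z : E} (i : x ⟶ y) (p : y ⟶ z) (r : y ⟶ x) (s : z ⟶ y)
    (hip : i ≫ p = 0) (hir : i ≫ r = 𝟙 x) (hsp : s ≫ p = 𝟙 z) (hsr : s ≫ r = 0)
    (hsplit : r ≫ i + p ≫ s = 𝟙 y) :
    (∀ ζ : Q z, Qmap p ζ = 0 → ζ = 0) ∧
    (∀ ζ : Q y, (Qmap i ζ = 0 ∧ ρ y ζ ≫ Dmap i = 0) ↔ ∃ ζ' : Q z, Qmap p ζ' = ζ) ∧
    (∀ (ξ : Q x) (φ : y ⟶ D x), ρ x ξ + i ≫ φ = 0 ↔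
      ∃ ζ : Q y, Qmap i ζ = ξ ∧ -(ρ y ζ ≫ Dmap i) = φ) ∧
    (∀ ψ : x ⟶ D x, ∃ (ξ : Q x) (φ : y ⟶ D x), ρ x ξ + i ≫ φ = ψ) := by
  have hD0 : ∀ {a b : E}, Dmap (0 : a ⟶ b) = 0 := by
    intro a b
    have h := Dmap_add (0 : a ⟶ b) 0
    rw [add_zero] at h
    exact left_eq_add.mp h
  have hQ0 : ∀ {a b : E} (ξ : Q b), Qmap (0 : a ⟶ b) ξ = 0 := by
    intro a b ξ
    have h := Qmap_sum (0 : a ⟶ b) 0 ξ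
    rw [add_zero, Limits.zero_comp, map_zero, add_zero] at h
    exact left_eq_add.mp h
  refine ⟨?_, ?_, ?_, ?_⟩
  · intro ζ h
    have : Qmap s (Qmap p ζ) = ζ := by rw [← Qmap_comp, hsp, Qmap_id]
    rw [h, map_zero] at this
    exact this.symm
  · intro ζ
    constructor
    · rintro ⟨h1, h2⟩
      refine ⟨Qmap s ζ, ?_⟩
      have hiρ : i ≫ ρ y ζ = 0 := by
        calc i ≫ ρ y ζ = i ≫ η y ≫ Dmap (ρ y ζ) := by rw [ρ_symm]
          _ = η x ≫ Dmap (Dmap i) ≫ Dmap (ρ y ζ) := by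
              rw [← Category.assoc, η_nat, Category.assoc]
          _ = η x ≫ Dmap (ρ y ζ ≫ Dmap i) := by rw [Dmap_comp]
          _ = 0 := by rw [h2, hD0, Limits.comp_zero]
      have hτ0 : i ≫ ρ y ζ ≫ Dmap (p ≫ s) = 0 := by
        rw [← Category.assoc, hiρ, Limits.zero_comp]
      have key : Qmap (𝟙 y) ζ = Qmap (r ≫ i) ζ + Qmap (p ≫ s) ζ +
          τ y ((r ≫ i) ≫ ρ y ζ ≫ Dmap (p ≫ s)) := by
        rw [← hsplit]; exact Qmap_sum _ _ ζ
      rw [Qmap_id, Qmap_comp, h1, map_zero, zero_add, Category.assoc, hτ0,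
        Limits.comp_zero, map_zero, add_zero, Qmap_comp] at key
      exact key.symm
    · rintro ⟨ζ', rfl⟩
      constructor
      · rw [← Qmap_comp, hip, hQ0]
      · rw [ρ_nat, Category.assoc, Category.assoc, ← Dmap_comp, hip, hD0]
        simp
  · intro ξ φ
    constructor
    · intro h
      have hρξ : ρ x ξ = -(i ≫ φ) := eq_neg_of_add_eq_zero_left h
      refine ⟨Qmap r ξ - τ y (p ≫ s ≫ φ ≫ Dmap r), ?_, ?_⟩
      · rw [map_sub, ← Qmap_comp, hir, Qmap_id, τ_nat]
        have h0 : i ≫ (p ≫ s ≫ φ ≫ Dmap r) ≫ Dmap i = 0 := by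
          rw [← Category.assoc, ← Category.assoc i p, hip]
          simp
        rw [h0, map_zero, sub_zero]
      · have hA : ρ y (Qmap r ξ) ≫ Dmap i = -(r ≫ i ≫ φ) := by
          rw [ρ_nat, Category.assoc, Category.assoc, ← Dmap_comp, hir, Dmap_id,
            Category.comp_id, hρξ]
          simp
        have hB : (p ≫ s ≫ φ ≫ Dmap r) ≫ Dmap i = p ≫ s ≫ φ := by
          rw [Category.assoc, Category.assoc, Category.assoc, ← Dmap_comp, hir,
            Dmap_id, Category.comp_id]
        have hC : (η y ≫ Dmap (p ≫ s ≫ φ ≫ Dmap r)) ≫ Dmap i = 0 := by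
          rw [Category.assoc, ← Dmap_comp]
          have h0 : i ≫ p ≫ s ≫ φ ≫ Dmap r = 0 := by
            rw [← Category.assoc, hip, Limits.zero_comp]
          rw [h0, hD0, Limits.comp_zero]
        have hfin : r ≫ i ≫ φ + p ≫ s ≫ φ = φ := by
          rw [← Category.assoc, ← Category.assoc, ← Preadditive.add_comp, hsplit,
            Category.id_comp]
        have hζ : ρ y (Qmap r ξ - τ y (p ≫ s ≫ φ ≫ Dmap r)) ≫ Dmap i = -φ := by
          rw [map_sub, ρτ, Preadditive.sub_comp, Preadditive.add_comp, hA, hB, hC,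
            add_zero]
          conv_rhs => rw [← hfin]
          abel
        rw [hζ, neg_neg]
    · rintro ⟨ζ, rfl, rfl⟩
      rw [ρ_nat]
      simp [Preadditive.comp_neg, Category.assoc]
  · intro ψ
    exact ⟨0, r ≫ ψ, by rw [map_zero, zero_add, ← Category.assoc, hir, Category.id_comp]⟩
end

section
/- Let $(\mathcal{E}, Q, \mathbb{D}, \eta)$ be an exact form category (so $Q$ is quadratic left exact). Define $L_Q:\mathcal{E}^{op}\to\mathrm{Ab}$ by $L_Q(x) := \ker\big(\rho_x : Q(x)\to\mathrm{Hom}(x,\mathbb{D}(x))\big)$. Then $L_Q$ is left exact: for every conflation $x\xrightarrow{i} y\xrightarrow{p} z$ the sequence $0\to L_Q(z)\xrightarrow{L_Q(p)} L_Q(y)\xrightarrow{L_Q(i)} L_Q(x)$ of abelian groups is exact. -/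
open CategoryTheory

universe v u w

/-- For an exact form category `(𝓔, Q, 𝔻, η)`, the functor
`L_Q(x) := ker(ρ_x : Q(x) → Hom(x, 𝔻 x))` is left exact: for every conflation
`x ↣ y ↠ z` the sequence `0 → L_Q(z) → L_Q(y) → L_Q(x)` of abelian groups is
exact.  The conflation is given by its kernel/cokernel universal properties, and
quadratic left exactness of `Q` and of the symmetric forms functor
`Hom(-, 𝔻 -)^{C₂}` on this conflation are part of the hypotheses. -/
theorem stmt3 {E : Type u} [Category.{v} E] [Preadditive E]
    (D : E → E) (Dmap : ∀ {x y : E}, (x ⟶ y) → (D y ⟶ D x))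
    (Dmap_id : ∀ x : E, Dmap (𝟙 x) = 𝟙 (D x))
    (Dmap_comp : ∀ {x y z : E} (f : x ⟶ y) (g : y ⟶ z), Dmap (f ≫ g) = Dmap g ≫ Dmap f)
    (Dmap_add : ∀ {x y : E} (f g : x ⟶ y), Dmap (f + g) = Dmap f + Dmap g)
    (η : ∀ x : E, x ⟶ D (D x))
    (η_nat : ∀ {x y : E} (f : x ⟶ y), f ≫ η y = η x ≫ Dmap (Dmap f))
    (η_coh : ∀ x : E, η (D x) ≫ Dmap (η x) = 𝟙 (D x))
    (Q : E → Type w) [∀ a : E, AddCommGroup (Q a)]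
    (Qmap : ∀ {a b : E}, (a ⟶ b) → (Q b →+ Q a))
    (Qmap_id : ∀ (a : E) (ξ : Q a), Qmap (𝟙 a) ξ = ξ)
    (Qmap_comp : ∀ {a b c : E} (f : a ⟶ b) (g : b ⟶ c) (ξ : Q c),
      Qmap (f ≫ g) ξ = Qmap f (Qmap g ξ))
    (τ : ∀ a : E, (a ⟶ D a) →+ Q a)
    (ρ : ∀ a : E, Q a →+ (a ⟶ D a))
    (τ_nat : ∀ {a b : E} (f : a ⟶ b) (φ : b ⟶ D b),
      Qmap f (τ b φ) = τ a (f ≫ φ ≫ Dmap f))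
    (ρ_nat : ∀ {a b : E} (f : a ⟶ b) (ξ : Q b),
      ρ a (Qmap f ξ) = f ≫ ρ b ξ ≫ Dmap f)
    (ρτ : ∀ (a : E) (φ : a ⟶ D a), ρ a (τ a φ) = φ + η a ≫ Dmap φ)
    (τ_equivariant : ∀ (a : E) (φ : a ⟶ D a), τ a (η a ≫ Dmap φ) = τ a φ)
    (ρ_symm : ∀ (a : E) (ξ : Q a), η a ≫ Dmap (ρ a ξ) = ρ a ξ)
    (Qmap_sum : ∀ {a b : E} (f g : a ⟶ b) (ξ : Q b),
      Qmap (f + g) ξ = Qmap f ξ + Qmap g ξ + τ a (f ≫ ρ b ξ ≫ Dmap g))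
    -- the conflation `x ↣ y ↠ z`
    {x y z : E} (i : x ⟶ y) (p : y ⟶ z) (hip : i ≫ p = 0)
    (hker : ∀ {w : E} (f : w ⟶ y), f ≫ p = 0 → ∃! g : w ⟶ x, g ≫ i = f)
    (hcoker : ∀ {w : E} (f : y ⟶ w), i ≫ f = 0 → ∃! g : z ⟶ w, p ≫ g = f)
    -- quadratic left exactness of `Q` on this conflation
    (hQlex_inj : ∀ ζ : Q z, Qmap p ζ = 0 → ζ = 0)
    (hQlex_ex : ∀ ζ : Q y,
      (Qmap i ζ = 0 ∧ ρ y ζ ≫ Dmap i = 0) ↔ ∃ ζ' : Q z, Qmap p ζ' = ζ)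
    -- quadratic left exactness of the symmetric forms functor on this conflation
    (hSlex_inj : ∀ φ : z ⟶ D z, η z ≫ Dmap φ = φ → p ≫ φ ≫ Dmap p = 0 → φ = 0)
    (hSlex_ex : ∀ φ : y ⟶ D y, η y ≫ Dmap φ = φ →
      ((i ≫ φ ≫ Dmap i = 0 ∧ (φ + η y ≫ Dmap φ) ≫ Dmap i = 0) ↔
        ∃ ψ : z ⟶ D z, η z ≫ Dmap ψ = ψ ∧ p ≫ ψ ≫ Dmap p = φ)) :
    (∀ ζ : Q z, ρ z ζ = 0 → Qmap p ζ = 0 → ζ = 0) ∧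
    (∀ ζ : Q y, ρ y ζ = 0 →
      (Qmap i ζ = 0 ↔ ∃ ζ' : Q z, ρ z ζ' = 0 ∧ Qmap p ζ' = ζ)) := by
  have Qmap_zero : ∀ {a b : E} (ξ : Q b), Qmap (0 : a ⟶ b) ξ = 0 := by
    intro a b ξ
    have h := Qmap_sum (0 : a ⟶ b) 0 ξ
    simp only [add_zero, Limits.zero_comp, map_zero] at h
    -- h : Qmap 0 ξ = Qmap 0 ξ + Qmap 0 ξ + 0
    have : Qmap (0 : a ⟶ b) ξ = Qmap (0 : a ⟶ b) ξ + Qmap (0 : a ⟶ b) ξ := by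
      simpa using h
    exact left_eq_add.mp this
  constructor
  · intro ζ _ h2; exact hQlex_inj ζ h2
  · intro ζ hρ
    constructor
    · intro hi
      obtain ⟨ζ', hζ'⟩ := (hQlex_ex ζ).mp ⟨hi, by rw [hρ]; simp⟩
      refine ⟨ζ', ?_, hζ'⟩
      apply hSlex_inj (ρ z ζ') (ρ_symm z ζ')
      have := ρ_nat p ζ'
      rw [hζ', hρ] at this
      exact this.symm
    · rintro ⟨ζ', _, rfl⟩
      rw [← Qmap_comp, hip, Qmap_zero]
end

section
/- For $n\ge 0$, let $P_n := \{(i,j) : 0\le i\le j\le n,\ i+j\le n\}$ with the componentwise order, and let $T_n\subseteq P_n$ be the subposet of pairs $(i,j)$ with $i+j\in\{n-1, n\}$. Then the inclusion $T_n\subseteq P_n$ is final in the sense of Quillen's Theorem A: for every $(i,j)\in P_n$, the subposet $\{(k,l)\in T_n : i\le k,\ j\le l\}$ is nonempty and connected (any two elements are joined by a zigzag of comparable elements within the subposet). -/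
/-- Membership in the poset `P_n = {(i,j) : i ≤ j ≤ n, i + j ≤ n}`. -/
def inP (n : ℕ) (p : ℕ × ℕ) : Prop := p.1 ≤ p.2 ∧ p.2 ≤ n ∧ p.1 + p.2 ≤ n

/-- Membership in the subposet `T_n ⊆ P_n` of pairs with `i + j ∈ {n-1, n}`. -/
def inT (n : ℕ) (p : ℕ × ℕ) : Prop := inP n p ∧ n - 1 ≤ p.1 + p.2

/-!
Every `q` in the coslice `{q ∈ T_n : p ≤ q}` lies below the point `(q.1, n - q.1)` of the
antidiagonal `i + j = n`, which is again in the coslice. Consecutive antidiagonal points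
`(k, n - k)` and `(k + 1, n - k - 1)` have the common lower bound `(k, n - k - 1)` in the
coslice, so walking along the antidiagonal joins every element to `(p.1, n - p.1)`.
-/

open Relation

section ComparableWithin

variable {α : Type*} [Preorder α] {s : Set α} {a b c : α}

def ComparableWithin (s : Set α) (a b : α) : Prop := a ∈ s ∧ b ∈ s ∧ (a ≤ b ∨ b ≤ a)

instance : Std.Symm (ComparableWithin s) where
  symm _ _ h := ⟨h.2.1, h.1, h.2.2.symm⟩

theorem ComparableWithin.of_le (ha : a ∈ s) (hb : b ∈ s) (hab : a ≤ b) :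
    ComparableWithin s a b :=
  ⟨ha, hb, .inl hab⟩

theorem reflTransGen_comparableWithin_of_le_of_le (ha : a ∈ s) (hb : b ∈ s) (hc : c ∈ s)
    (hca : c ≤ a) (hcb : c ≤ b) : ReflTransGen (ComparableWithin s) a b :=
  .tail (.single (Std.Symm.symm _ _ (.of_le hc ha hca))) (.of_le hc hb hcb)

end ComparableWithin

def coslice (n : ℕ) (p : ℕ × ℕ) : Set (ℕ × ℕ) := {q | inT n q ∧ p ≤ q}

def antidiagPoint (n k : ℕ) : ℕ × ℕ := (k, n - k)

section Coslice

variable {n : ℕ} {p q : ℕ × ℕ}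

theorem antidiagPoint_mem_coslice_iff {k : ℕ} :
    antidiagPoint n k ∈ coslice n p ↔ p.1 ≤ k ∧ 2 * k ≤ n ∧ p.2 + k ≤ n := by
  simp only [coslice, antidiagPoint, inT, inP, Set.mem_ofPred_eq, Prod.le_def]
  omega

theorem le_antidiagPoint (hq : inT n q) : q ≤ antidiagPoint n q.1 := by
  obtain ⟨⟨-, -, hsum⟩, -⟩ := hq
  exact Prod.le_def.2 ⟨le_rfl, by simp only [antidiagPoint]; omega⟩

theorem antidiagPoint_succ_reflTransGen {k : ℕ} (hk : p.1 ≤ k) (h2k : 2 * (k + 1) ≤ n)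
    (hpk : p.2 + (k + 1) ≤ n) :
    ReflTransGen (ComparableWithin (coslice n p)) (antidiagPoint n (k + 1)) (antidiagPoint n k) :=
  reflTransGen_comparableWithin_of_le_of_le (c := (k, n - k - 1))
    (antidiagPoint_mem_coslice_iff.2 ⟨by omega, h2k, hpk⟩)
    (antidiagPoint_mem_coslice_iff.2 ⟨hk, by omega, by omega⟩)
    (by simp only [coslice, inT, inP, Set.mem_ofPred_eq, Prod.le_def]; omega)
    (by simp only [antidiagPoint, Prod.le_def]; omega)
    (by simp only [antidiagPoint, Prod.le_def]; omega)

theorem antidiagPoint_reflTransGen_antidiagPoint_fst {k : ℕ}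
    (hk : antidiagPoint n k ∈ coslice n p) :
    ReflTransGen (ComparableWithin (coslice n p)) (antidiagPoint n k) (antidiagPoint n p.1) := by
  obtain ⟨hpk, h2k, hsum⟩ := antidiagPoint_mem_coslice_iff.1 hk
  clear hk
  induction k, hpk using Nat.le_induction with
  | base => exact .refl
  | succ m hm ih =>
    exact (antidiagPoint_succ_reflTransGen hm h2k hsum).trans (ih (by omega) (by omega))

theorem reflTransGen_antidiagPoint_fst_of_mem (hq : q ∈ coslice n p) :
    ReflTransGen (ComparableWithin (coslice n p)) q (antidiagPoint n p.1) := by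
  obtain ⟨⟨h12, -, hsum⟩, -⟩ := hq.1
  obtain ⟨hp1, hp2⟩ := hq.2
  have hmem : antidiagPoint n q.1 ∈ coslice n p :=
    antidiagPoint_mem_coslice_iff.2 ⟨hp1, by omega, by omega⟩
  exact .head (.of_le hq hmem (le_antidiagPoint hq.1))
    (antidiagPoint_reflTransGen_antidiagPoint_fst hmem)

end Coslice

/-- The inclusion `T_n ⊆ P_n` is final in the sense of Quillen's Theorem A:
for every `p ∈ P_n`, the coslice `{q ∈ T_n : p ≤ q}` is nonempty, and any two of
its elements are joined by a zigzag of comparable elements inside it. -/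
theorem stmt13 (n : ℕ) (p : ℕ × ℕ) (hp : inP n p) :
    (∃ q : ℕ × ℕ, inT n q ∧ p ≤ q) ∧
    (∀ q r : ℕ × ℕ, inT n q → p ≤ q → inT n r → p ≤ r →
      Relation.ReflTransGen
        (fun a b : ℕ × ℕ => (inT n a ∧ p ≤ a) ∧ (inT n b ∧ p ≤ b) ∧ (a ≤ b ∨ b ≤ a)) q r) := by
  obtain ⟨h12, -, hsum⟩ := hp
  refine ⟨⟨antidiagPoint n p.1, antidiagPoint_mem_coslice_iff.2 ⟨le_rfl, by omega, by omega⟩⟩,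
    fun q r hq hpq hr hpr => ?_⟩
  exact (reflTransGen_antidiagPoint_fst_of_mem ⟨hq, hpq⟩).trans
    (Std.Symm.symm _ _ (reflTransGen_antidiagPoint_fst_of_mem ⟨hr, hpr⟩))
end
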